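/- For real x with |x| < 1 and x ≠ 0, π·csc(π x) = 2·∑_{n=0}^∞ η(2n)·x^(2n−1), where η(0) = 1/2 and η(2n) = ∑_{k≥1} (−1)^{k−1}/k^{2n} for n ≥ 1. -/

import Mathlib

/-!
Subtracting the Mittag-Leffler expansions of `π cot (π x / 2)` and `π cot (π x)` gives
`π csc (π x) = 1/x + 2x ∑_{k ≥ 1} (-1)^(k+1) / (k² - x²)`, because `csc z = cot (z/2) - cot z`.
For `|x| < 1` each summand is a geometric series in `x² / k²`, and the resulting double series
converges absolutely, so summing it in the other order produces the eta values.
-/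

open Real

/-- Dirichlet eta at even arguments, with the convention η(0) = 1/2. -/
noncomputable def etaC (s : ℕ) : ℝ :=
  if s = 0 then 1 / 2 else ∑' k : ℕ, (-1 : ℝ) ^ k / ((k : ℝ) + 1) ^ s

namespace Complex

lemma inv_sin_eq_cot_half_sub_cot {z : ℂ} (hz : sin z ≠ 0) : (sin z)⁻¹ = cot (z / 2) - cot z := by
  obtain ⟨w, rfl⟩ : ∃ w, z = 2 * w := ⟨z / 2, by ring⟩
  rw [sin_two_mul] at hz
  have hs : sin w ≠ 0 := fun h => hz (by simp [h])
  have hc : cos w ≠ 0 := fun h => hz (by simp [h])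
  rw [mul_div_cancel_left₀ _ two_ne_zero, cot_eq_cos_div_sin, cot_eq_cos_div_sin, sin_two_mul,
    cos_two_mul]
  field_simp
  ring

lemma cotTerm_div_two (z : ℂ) (n : ℕ) : cotTerm (z / 2) n = 2 * cotTerm z (2 * n + 1) := by
  have h (a : ℂ) : 1 / (z / 2 + a) = 2 / (z + 2 * a) := by
    rw [show z / 2 + a = (z + 2 * a) / 2 by ring, one_div_div]
  simp only [cotTerm, sub_eq_add_neg, h]
  push_cast
  ring

theorem hasSum_pi_div_sin_sub_inv {z : ℂ} (hz : z ∈ integerComplement) :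
    HasSum (fun n : ℕ => (-1) ^ (n + 1) * cotTerm z n) (π / sin (π * z) - 1 / z) := by
  have hz2 : z / 2 ∈ integerComplement := fun ⟨n, hn⟩ => hz ⟨2 * n, by push_cast; rw [hn]; ring⟩
  have hcot : HasSum (cotTerm z) (π * cot (π * z) - 1 / z) := by
    rw [cot_series_rep' hz]; exact (summable_cotTerm hz).hasSum
  have hodd : HasSum (fun n : ℕ => 2 * cotTerm z (2 * n + 1))
      (π * cot (π * (z / 2)) - 1 / (z / 2)) := by
    simp_rw [← cotTerm_div_two, cot_series_rep' hz2]; exact (summable_cotTerm hz2).hasSum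
  have hsum : HasSum (fun n : ℕ => (-1) ^ (n + 1) * cotTerm z n + cotTerm z n)
      (0 + (π * cot (π * (z / 2)) - 1 / (z / 2))) := by
    refine HasSum.even_add_odd ?_ ?_
    · convert (hasSum_zero : HasSum (fun _ : ℕ => (0 : ℂ)) 0) using 2 with n
      rw [(odd_two_mul_add_one n).neg_one_pow, neg_one_mul, neg_add_cancel]
    · convert hodd using 2 with n
      rw [pow_succ, (odd_two_mul_add_one n).neg_one_pow]
      ring
  have hval : π / sin (π * z) - 1 / z =
      0 + (π * cot (π * (z / 2)) - 1 / (z / 2)) - (π * cot (π * z) - 1 / z) := by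
    rw [div_eq_mul_inv, inv_sin_eq_cot_half_sub_cot (sin_pi_mul_ne_zero hz), mul_div_assoc]
    ring
  rw [hval]
  simpa only [add_sub_cancel_right] using hsum.sub hcot

end Complex

theorem Real.hasSum_pi_div_sin_sub_inv {x : ℝ} (hx : ∀ n : ℤ, x ≠ n) :
    HasSum (fun n : ℕ => (-1) ^ n * (2 * x / ((n + 1) ^ 2 - x ^ 2))) (π / sin (π * x) - 1 / x) := by
  have hxC : (x : ℂ) ∈ Complex.integerComplement :=
    fun ⟨n, hn⟩ => hx n (by exact_mod_cast hn.symm)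
  rw [← Complex.hasSum_ofReal]
  convert Complex.hasSum_pi_div_sin_sub_inv hxC using 1
  · ext n
    have h1 : (x : ℂ) + (n + 1) ≠ 0 := by
      simpa using Complex.integerComplement_add_ne_zero hxC (n + 1)
    have h2 : (x : ℂ) - (n + 1) ≠ 0 := by
      simpa [sub_eq_add_neg] using Complex.integerComplement_add_ne_zero hxC (-(n + 1))
    have h3 : ((n : ℂ) + 1) ^ 2 - x ^ 2 ≠ 0 := by
      have := Complex.integerComplement_pow_two_ne_pow_two hxC (n + 1)
      push_cast at this
      exact sub_ne_zero.mpr this.symm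
    push_cast
    field_simp
    ring
  · push_cast; rfl

lemma hasSum_odd_pow_div_pow {x a : ℝ} (h : |x| < a) :
    HasSum (fun m : ℕ => x ^ (2 * m + 1) / a ^ (2 * m + 2)) (x / (a ^ 2 - x ^ 2)) := by
  have ha : 0 < a := (abs_nonneg x).trans_lt h
  have hr : x ^ 2 / a ^ 2 < 1 := by
    rw [div_lt_one (by positivity), ← sq_abs]
    exact pow_lt_pow_left₀ h (abs_nonneg x) two_ne_zero
  have hxa : a ^ 2 - x ^ 2 ≠ 0 := by
    rw [div_lt_one (by positivity)] at hr; linarith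
  rw [show x / (a ^ 2 - x ^ 2) = x / a ^ 2 * (1 - x ^ 2 / a ^ 2)⁻¹ by field_simp]
  refine ((hasSum_geometric_of_lt_one (by positivity) hr).mul_left (x / a ^ 2)).congr_fun
    fun m => ?_
  rw [div_pow, ← pow_mul, ← pow_mul]
  field_simp
  ring

lemma summable_inv_nat_add_one_sq : Summable (fun k : ℕ => (((k : ℝ) + 1) ^ 2)⁻¹) := by
  exact_mod_cast (summable_nat_add_iff 1).mpr (Real.summable_nat_pow_inv.mpr one_lt_two)

lemma summable_neg_one_pow_mul_odd_pow_div {x : ℝ} (hx : |x| < 1) :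
    Summable fun p : ℕ × ℕ =>
      (-1 : ℝ) ^ p.2 * x ^ (2 * p.1 + 1) / ((p.2 : ℝ) + 1) ^ (2 * p.1 + 2) := by
  have hx2 : x ^ 2 < 1 := by rw [← sq_abs]; nlinarith [abs_nonneg x]
  refine .of_norm_bounded ((summable_geometric_of_lt_one (sq_nonneg x) hx2).mul_of_nonneg
    summable_inv_nat_add_one_sq (fun _ => by positivity) (fun _ => by positivity)) fun ⟨m, k⟩ => ?_
  have hk : (1 : ℝ) ≤ (k : ℝ) + 1 := by simp
  have hnum : |x| ^ (2 * m + 1) ≤ (x ^ 2) ^ m := by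
    rw [← sq_abs, ← pow_mul]; exact pow_le_pow_of_le_one (abs_nonneg x) hx.le (by omega)
  have hden : ((k : ℝ) + 1) ^ 2 ≤ ((k : ℝ) + 1) ^ (2 * m + 2) := pow_le_pow_right₀ hk (by omega)
  simp only [norm_div, norm_mul, norm_pow, norm_neg, norm_one, one_pow, one_mul, Real.norm_eq_abs,
    abs_of_pos (by positivity : (0 : ℝ) < k + 1), ← div_eq_mul_inv]
  exact div_le_div₀ (by positivity) hnum (by positivity) hden

lemma hasSum_etaC_mul_pow {x : ℝ} (hx : |x| < 1) :
    HasSum (fun m : ℕ => etaC (2 * (m + 1)) * x ^ (2 * m + 1))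
      (∑' k : ℕ, (-1 : ℝ) ^ k * (x / (((k : ℝ) + 1) ^ 2 - x ^ 2))) := by
  set F := fun p : ℕ × ℕ => (-1 : ℝ) ^ p.2 * x ^ (2 * p.1 + 1) / ((p.2 : ℝ) + 1) ^ (2 * p.1 + 2)
  have hF : Summable F := summable_neg_one_pow_mul_odd_pow_div hx
  have hrow (m : ℕ) : HasSum (fun k => F (m, k)) (etaC (2 * (m + 1)) * x ^ (2 * m + 1)) := by
    have hval : etaC (2 * (m + 1)) * x ^ (2 * m + 1) = ∑' k, F (m, k) := by
      rw [etaC, if_neg (by omega), ← tsum_mul_right]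
      exact tsum_congr fun k => by simp only [F]; ring
    exact hval ▸ (hF.prod_factor m).hasSum
  have hcol (k : ℕ) :
      HasSum (fun m => F (m, k)) ((-1) ^ k * (x / (((k : ℝ) + 1) ^ 2 - x ^ 2))) := by
    have hxk : |x| < (k : ℝ) + 1 := hx.trans_le (by simp)
    refine ((hasSum_odd_pow_div_pow hxk).mul_left ((-1) ^ k)).congr_fun fun m => ?_
    simp only [F]
    ring
  rw [(hF.prod_symm.hasSum.prod_fiberwise hcol).tsum_eq,
    show ∑' p : ℕ × ℕ, F p.swap = ∑' p, F p from (Equiv.prodComm ℕ ℕ).tsum_eq F]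
  exact hF.hasSum.prod_fiberwise hrow

theorem stmt_6 (x : ℝ) (hx : |x| < 1) (hx0 : x ≠ 0) :
    π * (Real.sin (π * x))⁻¹ =
      2 * ∑' n : ℕ, etaC (2 * n) * x ^ (2 * (n : ℤ) - 1) := by
  have hxZ : ∀ n : ℤ, x ≠ n := by
    rintro n rfl
    have hn : n = 0 := Int.abs_lt_one_iff.mp (by exact_mod_cast hx)
    exact hx0 (by simp [hn])
  have hcsc : HasSum (fun k : ℕ => (-1 : ℝ) ^ k * (x / (((k : ℝ) + 1) ^ 2 - x ^ 2)))
      ((π / sin (π * x) - 1 / x) / 2) :=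
    ((Real.hasSum_pi_div_sin_sub_inv hxZ).div_const 2).congr_fun fun k => by ring
  have htail : HasSum (fun n : ℕ => etaC (2 * ↑(n + 1)) * x ^ (2 * ((n + 1 : ℕ) : ℤ) - 1))
      ((π / sin (π * x) - 1 / x) / 2) := by
    rw [← hcsc.tsum_eq]
    refine (hasSum_etaC_mul_pow hx).congr_fun fun n => ?_
    rw [show 2 * ((n + 1 : ℕ) : ℤ) - 1 = (2 * n + 1 : ℕ) by push_cast; ring, zpow_natCast]
  rw [((hasSum_nat_add_iff (f := fun n : ℕ => etaC (2 * n) * x ^ (2 * (n : ℤ) - 1)) 1).mp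
    htail).tsum_eq, Finset.sum_range_one]
  simp only [etaC, Nat.cast_zero, mul_zero, if_true, zero_sub, zpow_neg_one]
  ring
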